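/- Let u, v ∈ ℂ with Im u < 0 and Im v < 0, and let θ ∈ ℝ. Then lim_{L→∞} [ − e^(−iπ(u+v)/L) / ( 2 L² sin(πu/L) sin(πv/L) ) + (1/L²) ( 1/(e^(2πiu/L) − 1) + 1/(e^(2πiv/L) − 1) ) + θ/L² ] = −1 / ( 2 π² u v ). -/

import Mathlib

open Filter
open scoped Topology

private lemma tendsto_cdiv0 (c : ℂ) :
    Tendsto (fun L : ℝ => c / (L : ℂ)) atTop (𝓝 (0 : ℂ)) := by
  have h : Tendsto (fun L : ℝ => ((L⁻¹ : ℝ) : ℂ)) atTop (𝓝 (0 : ℂ)) := by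
    have := (Complex.continuous_ofReal.tendsto 0).comp tendsto_inv_atTop_zero
    simpa [Function.comp_def] using this
  have : Tendsto (fun L : ℝ => c * ((L⁻¹ : ℝ) : ℂ)) atTop (𝓝 (c * 0)) :=
    tendsto_const_nhds.mul h
  simpa [div_eq_mul_inv, Complex.ofReal_inv] using this

private lemma tendsto_cdiv (c : ℂ) (hc : c ≠ 0) :
    Tendsto (fun L : ℝ => c / (L : ℂ)) atTop (𝓝[≠] (0 : ℂ)) := by
  rw [tendsto_nhdsWithin_iff]
  refine ⟨tendsto_cdiv0 c, ?_⟩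
  filter_upwards [eventually_gt_atTop (0 : ℝ)] with L hL
  have hL' : (L : ℂ) ≠ 0 := by exact_mod_cast hL.ne'
  exact div_ne_zero hc hL'

private lemma tendsto_sin_div : Tendsto (fun z : ℂ => Complex.sin z / z) (𝓝[≠] (0 : ℂ)) (𝓝 1) := by
  have h := (Complex.hasDerivAt_sin 0)
  rw [hasDerivAt_iff_tendsto_slope] at h
  rw [Complex.cos_zero] at h
  refine h.congr fun z => ?_
  simp [slope_def_field]

private lemma tendsto_exp_sub_one_div :
    Tendsto (fun z : ℂ => (Complex.exp z - 1) / z) (𝓝[≠] (0 : ℂ)) (𝓝 1) := by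
  have h := (Complex.hasDerivAt_exp 0)
  rw [hasDerivAt_iff_tendsto_slope] at h
  rw [Complex.exp_zero] at h
  refine h.congr fun z => ?_
  simp [slope_def_field]

private lemma alg1 (p u v Lc a b N : ℂ) (hL : Lc ≠ 0) :
    N / (2 * Lc ^ 2 * ((p * u / Lc) * a) * ((p * v / Lc) * b))
      = N / (2 * p ^ 2 * u * v * a * b) := by
  congr 1
  field_simp

private lemma alg2one (c Lc a : ℂ) (hL : Lc ≠ 0) :
    (1 / Lc ^ 2) * (1 / ((c / Lc) * a)) = (1 / Lc) * (1 / (c * a)) := by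
  by_cases h : c * a = 0
  · have h' : (c / Lc) * a = 0 := by
      rcases mul_eq_zero.1 h with h | h <;> simp [h]
    simp [h, h']
  · have hc : c ≠ 0 := fun hc => h (by simp [hc])
    have ha : a ≠ 0 := fun ha => h (by simp [ha])
    field_simp

private lemma alg2 (c d Lc a b : ℂ) (hL : Lc ≠ 0) :
    (1 / Lc ^ 2) * (1 / ((c / Lc) * a) + 1 / ((d / Lc) * b))
      = (1 / Lc) * (1 / (c * a) + 1 / (d * b)) := by
  rw [mul_add, mul_add, alg2one c Lc a hL, alg2one d Lc b hL]

/-- Large-circumference limit of the untwisted correlation function on the cylinder: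
for `Im u < 0`, `Im v < 0` and any zero-mode parameter `θ ∈ ℝ`,
`lim_{L→∞} [ −e^{−iπ(u+v)/L}/(2L² sin(πu/L) sin(πv/L))
  + (1/L²)(1/(e^{2πiu/L}−1) + 1/(e^{2πiv/L}−1)) + θ/L² ] = −1/(2π² u v)`. -/
theorem untwisted_correlation_large_circumference_limit (u v : ℂ)
    (hu : u.im < 0) (hv : v.im < 0) (θ : ℝ) :
    Tendsto (fun L : ℝ =>
        -Complex.exp (-Complex.I * (Real.pi : ℂ) * (u + v) / L) /
            (2 * (L : ℂ) ^ 2 * Complex.sin ((Real.pi : ℂ) * u / L)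
              * Complex.sin ((Real.pi : ℂ) * v / L))
          + (1 / (L : ℂ) ^ 2) *
              (1 / (Complex.exp (2 * (Real.pi : ℂ) * Complex.I * u / L) - 1)
                + 1 / (Complex.exp (2 * (Real.pi : ℂ) * Complex.I * v / L) - 1))
          + (θ : ℂ) / (L : ℂ) ^ 2)
      atTop (𝓝 (-1 / (2 * (Real.pi : ℂ) ^ 2 * u * v))) := by
  have hπ : (Real.pi : ℂ) ≠ 0 := by exact_mod_cast Real.pi_ne_zero
  have hu0 : u ≠ 0 := fun h => by simp [h] at hu
  have hv0 : v ≠ 0 := fun h => by simp [h] at hv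
  have hI : Complex.I ≠ 0 := Complex.I_ne_zero
  let gu : ℝ → ℂ := fun L => Complex.sin ((Real.pi : ℂ) * u / L) / ((Real.pi : ℂ) * u / L)
  let gv : ℝ → ℂ := fun L => Complex.sin ((Real.pi : ℂ) * v / L) / ((Real.pi : ℂ) * v / L)
  let eu : ℝ → ℂ := fun L =>
    (Complex.exp (2 * (Real.pi : ℂ) * Complex.I * u / L) - 1) / (2 * (Real.pi : ℂ) * Complex.I * u / L)
  let ev : ℝ → ℂ := fun L =>
    (Complex.exp (2 * (Real.pi : ℂ) * Complex.I * v / L) - 1) / (2 * (Real.pi : ℂ) * Complex.I * v / L)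
  have hgu : Tendsto gu atTop (𝓝 1) :=
    tendsto_sin_div.comp (tendsto_cdiv _ (mul_ne_zero hπ hu0))
  have hgv : Tendsto gv atTop (𝓝 1) :=
    tendsto_sin_div.comp (tendsto_cdiv _ (mul_ne_zero hπ hv0))
  have hcu : (2 * (Real.pi : ℂ) * Complex.I * u) ≠ 0 :=
    mul_ne_zero (mul_ne_zero (mul_ne_zero two_ne_zero hπ) hI) hu0
  have hcv : (2 * (Real.pi : ℂ) * Complex.I * v) ≠ 0 :=
    mul_ne_zero (mul_ne_zero (mul_ne_zero two_ne_zero hπ) hI) hv0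
  have heu : Tendsto eu atTop (𝓝 1) := tendsto_exp_sub_one_div.comp (tendsto_cdiv _ hcu)
  have hev : Tendsto ev atTop (𝓝 1) := tendsto_exp_sub_one_div.comp (tendsto_cdiv _ hcv)
  have h1L : Tendsto (fun L : ℝ => 1 / (L : ℂ)) atTop (𝓝 0) := tendsto_cdiv0 1
  -- Term 1
  have h1 : Tendsto (fun L : ℝ =>
      -Complex.exp (-Complex.I * (Real.pi : ℂ) * (u + v) / L) /
        (2 * (L : ℂ) ^ 2 * Complex.sin ((Real.pi : ℂ) * u / L)
          * Complex.sin ((Real.pi : ℂ) * v / L)))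
      atTop (𝓝 (-1 / (2 * (Real.pi : ℂ) ^ 2 * u * v))) := by
    have hnum : Tendsto (fun L : ℝ =>
        -Complex.exp (-Complex.I * (Real.pi : ℂ) * (u + v) / L)) atTop (𝓝 (-1)) := by
      have h0 := (Complex.continuous_exp.tendsto 0).comp
        (tendsto_cdiv0 (-Complex.I * (Real.pi : ℂ) * (u + v)))
      have h2 : Tendsto (fun L : ℝ =>
          Complex.exp (-Complex.I * (Real.pi : ℂ) * (u + v) / L)) atTop (𝓝 1) := by
        simpa [Function.comp_def] using h0
      simpa using h2.neg
    have hden : Tendsto (fun L : ℝ => 2 * (Real.pi : ℂ) ^ 2 * u * v * gu L * gv L)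
        atTop (𝓝 (2 * (Real.pi : ℂ) ^ 2 * u * v)) := by
      have := (hgu.const_mul (2 * (Real.pi : ℂ) ^ 2 * u * v)).mul hgv
      simpa using this
    have hdne : (2 * (Real.pi : ℂ) ^ 2 * u * v) ≠ 0 :=
      mul_ne_zero (mul_ne_zero (mul_ne_zero two_ne_zero (pow_ne_zero _ hπ)) hu0) hv0
    have key := hnum.div hden hdne
    refine Tendsto.congr' ?_ key
    filter_upwards [eventually_gt_atTop (0 : ℝ)] with L hL
    have hL' : (L : ℂ) ≠ 0 := by exact_mod_cast hL.ne'
    have hsu : Complex.sin ((Real.pi : ℂ) * u / L) = ((Real.pi : ℂ) * u / L) * gu L := by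
      rw [mul_div_cancel₀ _ (div_ne_zero (mul_ne_zero hπ hu0) hL')]
    have hsv : Complex.sin ((Real.pi : ℂ) * v / L) = ((Real.pi : ℂ) * v / L) * gv L := by
      rw [mul_div_cancel₀ _ (div_ne_zero (mul_ne_zero hπ hv0) hL')]
    simp only [Pi.div_apply]
    rw [hsu, hsv, alg1 _ _ _ _ _ _ _ hL']
  -- Term 2
  have h2 : Tendsto (fun L : ℝ =>
      (1 / (L : ℂ) ^ 2) *
        (1 / (Complex.exp (2 * (Real.pi : ℂ) * Complex.I * u / L) - 1)
          + 1 / (Complex.exp (2 * (Real.pi : ℂ) * Complex.I * v / L) - 1)))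
      atTop (𝓝 0) := by
    have hau : Tendsto (fun L : ℝ => 2 * (Real.pi : ℂ) * Complex.I * u * eu L) atTop
        (𝓝 (2 * (Real.pi : ℂ) * Complex.I * u)) := by
      simpa using heu.const_mul (2 * (Real.pi : ℂ) * Complex.I * u)
    have hav : Tendsto (fun L : ℝ => 2 * (Real.pi : ℂ) * Complex.I * v * ev L) atTop
        (𝓝 (2 * (Real.pi : ℂ) * Complex.I * v)) := by
      simpa using hev.const_mul (2 * (Real.pi : ℂ) * Complex.I * v)
    have hin : Tendsto (fun L : ℝ =>
        1 / (2 * (Real.pi : ℂ) * Complex.I * u * eu L)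
          + 1 / (2 * (Real.pi : ℂ) * Complex.I * v * ev L)) atTop
        (𝓝 (1 / (2 * (Real.pi : ℂ) * Complex.I * u)
          + 1 / (2 * (Real.pi : ℂ) * Complex.I * v))) := by
      have ha : Tendsto (fun L : ℝ => 1 / (2 * (Real.pi : ℂ) * Complex.I * u * eu L)) atTop
          (𝓝 (1 / (2 * (Real.pi : ℂ) * Complex.I * u))) :=
        Tendsto.div tendsto_const_nhds hau hcu
      have hb : Tendsto (fun L : ℝ => 1 / (2 * (Real.pi : ℂ) * Complex.I * v * ev L)) atTop
          (𝓝 (1 / (2 * (Real.pi : ℂ) * Complex.I * v))) :=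
        Tendsto.div tendsto_const_nhds hav hcv
      exact ha.add hb
    have key := h1L.mul hin
    rw [zero_mul] at key
    refine Tendsto.congr' ?_ key
    filter_upwards [eventually_gt_atTop (0 : ℝ)] with L hL
    have hL' : (L : ℂ) ≠ 0 := by exact_mod_cast hL.ne'
    have heq1 : Complex.exp (2 * (Real.pi : ℂ) * Complex.I * u / L) - 1
        = (2 * (Real.pi : ℂ) * Complex.I * u / L) * eu L := by
      rw [mul_div_cancel₀ _ (div_ne_zero hcu hL')]
    have heq2 : Complex.exp (2 * (Real.pi : ℂ) * Complex.I * v / L) - 1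
        = (2 * (Real.pi : ℂ) * Complex.I * v / L) * ev L := by
      rw [mul_div_cancel₀ _ (div_ne_zero hcv hL')]
    rw [heq1, heq2, alg2 _ _ _ _ _ hL']
  -- Term 3
  have h3 : Tendsto (fun L : ℝ => (θ : ℂ) / (L : ℂ) ^ 2) atTop (𝓝 0) := by
    have key := (h1L.mul h1L).const_mul (θ : ℂ)
    rw [mul_zero, mul_zero] at key
    refine Tendsto.congr' ?_ key
    filter_upwards [eventually_gt_atTop (0 : ℝ)] with L hL
    rw [one_div_mul_one_div, mul_one_div, pow_two]
  have := (h1.add h2).add h3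
  simpa using this
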